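/- arXiv:1311.0717 — 4 statements merged into one kernel-verified Lean document; each statement's English description precedes it below -/
import Mathlib

section
/- Let a and b be nonzero integers. Then there exist infinitely many quadruples (x, y, z, w) of polynomials in ℤ[t] with gcd(x, y, z, w) = 1 satisfying a·(x² − y⁶) = b·(z⁶ − w⁶) and z⁶ ≠ w⁶ (as polynomials). -/
open Polynomial

/-! With `E = 192 a b⁵ m⁶`, `z = 1 + E`, `w = 1 - E` one has `z⁶ - w⁶ = 4E(3 + 10E² + 3E⁴)`, and for
`y = 4bm` the quantity `y⁶ + (b/a)(z⁶ - w⁶)` is the square of `x = 16 b³ m³ (110592 a² b¹⁰ m¹² + 5)`.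
This gives a solution for every parameter `m`, in particular for every `m ∈ ℤ[t]`; `y` determines
`m`, `z - 48 a b⁴ m⁵ y = 1` makes the quadruple coprime, and `z⁶ ≠ w⁶` for `m ≠ 0` because
`3 + 10E² + 3E⁴` is positive at `t = 0`. -/

namespace SexticFamily

variable {R : Type*} [CommRing R]

def quadruple (a b m : R) : R × R × R × R :=
  (16 * b ^ 3 * m ^ 3 * (110592 * a ^ 2 * b ^ 10 * m ^ 12 + 5), 4 * b * m,
    1 + 192 * a * b ^ 5 * m ^ 6, 1 - 192 * a * b ^ 5 * m ^ 6)

theorem quadruple_equation (a b m : R) :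
    a * ((quadruple a b m).1 ^ 2 - (quadruple a b m).2.1 ^ 6) =
      b * ((quadruple a b m).2.2.1 ^ 6 - (quadruple a b m).2.2.2 ^ 6) := by
  simp only [quadruple]
  ring

theorem dvd_one_of_dvd_quadruple {a b m d : R} (hy : d ∣ (quadruple a b m).2.1)
    (hz : d ∣ (quadruple a b m).2.2.1) : d ∣ 1 := by
  have hunit : (quadruple a b m).2.2.1 - 48 * a * b ^ 4 * m ^ 5 * (quadruple a b m).2.1 = 1 := by
    simp only [quadruple]
    ring
  exact hunit ▸ dvd_sub hz (hy.mul_left _)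

theorem quadruple_injective [IsDomain R] [CharZero R] {a b : R} (hb : b ≠ 0) :
    Function.Injective (quadruple a b) := fun m₁ m₂ h =>
  mul_left_cancel₀ (mul_ne_zero (by norm_num) hb) (congrArg (·.2.1) h)

end SexticFamily

theorem Polynomial.one_add_pow_six_ne_one_sub_pow_six {E : ℤ[X]} (hE : E ≠ 0) :
    (1 + E) ^ 6 ≠ (1 - E) ^ 6 := by
  have hfactor : 3 + 10 * E ^ 2 + 3 * E ^ 4 ≠ 0 := fun h => by
    have h0 := congrArg (eval 0) h
    simp only [eval_add, eval_mul, eval_pow, eval_ofNat, eval_zero] at h0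
    nlinarith [sq_nonneg (E.eval 0), pow_two_nonneg (E.eval 0 ^ 2)]
  rw [Ne, ← sub_eq_zero, show (1 + E) ^ 6 - (1 - E) ^ 6 = 4 * E * (3 + 10 * E ^ 2 + 3 * E ^ 4) by
    ring]
  exact mul_ne_zero (mul_ne_zero (by norm_num) hE) hfactor

open SexticFamily in
/-- Let `a` and `b` be nonzero integers. Then there exist infinitely many quadruples
`(x, y, z, w)` of polynomials in `ℤ[t]` with `gcd(x, y, z, w) = 1` (i.e. every common
divisor of the four polynomials is a unit) satisfying `a*(x^2 - y^6) = b*(z^6 - w^6)`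
and `z^6 ≠ w^6` as polynomials. -/
theorem stmt_0 (a b : ℤ) (ha : a ≠ 0) (hb : b ≠ 0) :
    {q : ℤ[X] × ℤ[X] × ℤ[X] × ℤ[X] |
      C a * (q.1 ^ 2 - q.2.1 ^ 6) = C b * (q.2.2.1 ^ 6 - q.2.2.2 ^ 6) ∧
      q.2.2.1 ^ 6 ≠ q.2.2.2 ^ 6 ∧
      ∀ d : ℤ[X], d ∣ q.1 → d ∣ q.2.1 → d ∣ q.2.2.1 → d ∣ q.2.2.2 → IsUnit d}.Infinite := by
  have hCa : C a ≠ 0 := C_ne_zero.mpr ha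
  have hCb : C b ≠ 0 := C_ne_zero.mpr hb
  refine (((Set.finite_singleton (0 : ℤ[X])).infinite_compl).image
    (quadruple_injective (a := C a) hCb).injOn).mono ?_
  rintro _ ⟨m, hm, rfl⟩
  refine ⟨quadruple_equation _ _ _, ?_, fun d _ hy hz _ => isUnit_of_dvd_one
    (dvd_one_of_dvd_quadruple hy hz)⟩
  exact one_add_pow_six_ne_one_sub_pow_six <|
    mul_ne_zero (mul_ne_zero (mul_ne_zero (by norm_num) hCa) (pow_ne_zero _ hCb)) (pow_ne_zero _ hm)
end

section
/- Let a and b be nonzero coprime integers. Then there exist infinitely many quadruples (x, y, z, w) of integers with gcd(x, y, z, w) = 1 satisfying a·(x² − y⁶) = b·(z⁶ − w⁶) and z⁶ ≠ w⁶. -/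
/-!
Write `x² - y⁶ = (x - y³)(x + y³)` and `z⁶ - w⁶ = (z³ - w³)(z³ + w³)`. Putting
`x = t³(z³ + w³) - y³` reduces the equation to the plane cubic
`(a t⁶ - b) z³ + (a t⁶ + b) w³ = 2 a t³ y³`, which has the trivial point `(1, 1, t)`. The
tangent at that point meets the cubic again at `(-(3a t⁶ + b), 3a t⁶ - b, 2bt)`; after dividing
by the gcd of its coordinates this gives a primitive nontrivial solution whose `y` is a nonzero
multiple of `t`, so `|y|` is unbounded as `t` varies.
-/

theorem Int.exists_primitive_triple {y₀ z₀ w₀ : ℤ} (hy₀ : y₀ ≠ 0) :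
    ∃ g y z w : ℤ, g ≠ 0 ∧ y₀ = g * y ∧ z₀ = g * z ∧ w₀ = g * w ∧
      Int.gcd (Int.gcd y z) w = 1 := by
  obtain ⟨k, hk⟩ : ∃ k, Int.gcd (Int.gcd y₀ z₀) w₀ = k := ⟨_, rfl⟩
  have hk₀ : k ≠ 0 := by simp [← hk, Int.gcd_eq_zero_iff, hy₀]
  have hyz : (k : ℤ) ∣ Int.gcd y₀ z₀ := hk ▸ Int.gcd_dvd_left _ _
  obtain ⟨w, rfl⟩ : (k : ℤ) ∣ w₀ := hk ▸ Int.gcd_dvd_right _ _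
  obtain ⟨y, rfl⟩ : (k : ℤ) ∣ y₀ := hyz.trans (Int.gcd_dvd_left _ _)
  obtain ⟨z, rfl⟩ : (k : ℤ) ∣ z₀ := hyz.trans (Int.gcd_dvd_right _ _)
  refine ⟨k, y, z, w, by exact_mod_cast hk₀, rfl, rfl, rfl, ?_⟩
  rw [Int.gcd_mul_left, Int.natAbs_natCast, Nat.cast_mul, Int.gcd_mul_left,
    Int.natAbs_natCast] at hk
  exact (Nat.mul_eq_left hk₀).mp hk

theorem Int.gcd_gcd_gcd_eq_one_of_gcd_gcd_eq_one {y z w : ℤ} (x : ℤ)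
    (h : Int.gcd (Int.gcd y z) w = 1) : Int.gcd (Int.gcd (Int.gcd x y) z) w = 1 := by
  rw [Int.gcd_assoc, Int.gcd_assoc, ← Int.gcd_assoc y, h, Nat.cast_one, Int.gcd_one_right]

section Cubic

variable {R : Type*} [CommRing R]

theorem sextic_eq_of_cubic {a b t y z w : R}
    (h : (a * t ^ 6 - b) * z ^ 3 + (a * t ^ 6 + b) * w ^ 3 = 2 * a * t ^ 3 * y ^ 3) :
    a * ((t ^ 3 * (z ^ 3 + w ^ 3) - y ^ 3) ^ 2 - y ^ 6) = b * (z ^ 6 - w ^ 6) := by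
  linear_combination (z ^ 3 + w ^ 3) * h

theorem cubic_tangent_point (a b t : R) :
    (a * t ^ 6 - b) * (-(3 * a * t ^ 6 + b)) ^ 3 + (a * t ^ 6 + b) * (3 * a * t ^ 6 - b) ^ 3 =
      2 * a * t ^ 3 * (2 * b * t) ^ 3 := by
  ring

theorem cubic_of_mul_left [IsDomain R] {a b t g y z w : R} (hg : g ≠ 0)
    (h : (a * t ^ 6 - b) * (g * z) ^ 3 + (a * t ^ 6 + b) * (g * w) ^ 3 =
      2 * a * t ^ 3 * (g * y) ^ 3) :
    (a * t ^ 6 - b) * z ^ 3 + (a * t ^ 6 + b) * w ^ 3 = 2 * a * t ^ 3 * y ^ 3 :=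
  mul_left_cancel₀ (pow_ne_zero 3 hg) (by linear_combination h)

end Cubic

theorem exists_primitive_solution_of_ne_zero {a b t : ℤ} (ha : a ≠ 0) (hb : b ≠ 0)
    (ht : t ≠ 0) :
    ∃ x y z w : ℤ, a * (x ^ 2 - y ^ 6) = b * (z ^ 6 - w ^ 6) ∧ z ^ 6 ≠ w ^ 6 ∧
      Int.gcd (Int.gcd (Int.gcd x y) z) w = 1 ∧ t.natAbs ≤ y.natAbs := by
  obtain ⟨g, y, z, w, hg, hy, hz, hw, hprim⟩ :=
    Int.exists_primitive_triple (y₀ := 2 * b * t) (z₀ := -(3 * a * t ^ 6 + b))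
      (w₀ := 3 * a * t ^ 6 - b) (by positivity)
  have hcubic := cubic_tangent_point a b t
  rw [hy, hz, hw] at hcubic
  have hsum : g * (z + w) = -(2 * b) := by linear_combination -hz - hw
  have hdiff : g * (w - z) = 6 * a * t ^ 6 := by linear_combination hz - hw
  have hyt : y = -(z + w) * t := mul_left_cancel₀ hg (by linear_combination t * hsum - hy)
  refine ⟨_, y, z, w, sextic_eq_of_cubic (cubic_of_mul_left hg hcubic), ?_,
    Int.gcd_gcd_gcd_eq_one_of_gcd_gcd_eq_one _ hprim, ?_⟩
  · rw [Ne, pow_eq_pow_iff_of_ne_zero (by norm_num)]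
    rintro (rfl | ⟨rfl, -⟩)
    · exact mul_ne_zero (mul_ne_zero (by norm_num : (6 : ℤ) ≠ 0) ha) (pow_ne_zero 6 ht)
        (by rw [← hdiff, sub_self, mul_zero])
    · exact mul_ne_zero two_ne_zero hb
        (neg_eq_zero.mp (by rw [← hsum, neg_add_cancel, mul_zero]))
  · have hy₀ : y ≠ 0 := by rintro rfl; simp [hb, ht] at hy
    exact Int.natAbs_le_of_dvd_ne_zero (hyt ▸ dvd_mul_left t _) hy₀

theorem stmt_3_general (a b : ℤ) (ha : a ≠ 0) (hb : b ≠ 0) :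
    {q : ℤ × ℤ × ℤ × ℤ |
      a * (q.1 ^ 2 - q.2.1 ^ 6) = b * (q.2.2.1 ^ 6 - q.2.2.2 ^ 6) ∧
      q.2.2.1 ^ 6 ≠ q.2.2.2 ^ 6 ∧
      Int.gcd (Int.gcd (Int.gcd q.1 q.2.1) q.2.2.1) q.2.2.2 = 1}.Infinite := by
  refine Set.Infinite.of_image (fun q => q.2.1.natAbs) (Set.infinite_of_forall_exists_gt ?_)
  intro n
  obtain ⟨x, y, z, w, hsol, hnontriv, hprim, hle⟩ :=
    exists_primitive_solution_of_ne_zero (t := n + 1) ha hb (by omega)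
  exact ⟨y.natAbs, ⟨(x, y, z, w), ⟨hsol, hnontriv, hprim⟩, rfl⟩, by omega⟩

/-- Let `a` and `b` be nonzero coprime integers. Then there exist infinitely many
quadruples `(x, y, z, w)` of integers with `gcd(x, y, z, w) = 1` satisfying
`a*(x^2 - y^6) = b*(z^6 - w^6)` and `z^6 ≠ w^6`. -/
theorem stmt_3 (a b : ℤ) (ha : a ≠ 0) (hb : b ≠ 0) (hab : IsCoprime a b) :
    {q : ℤ × ℤ × ℤ × ℤ |
      a * (q.1 ^ 2 - q.2.1 ^ 6) = b * (q.2.2.1 ^ 6 - q.2.2.2 ^ 6) ∧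
      q.2.2.1 ^ 6 ≠ q.2.2.2 ^ 6 ∧
      Int.gcd (Int.gcd (Int.gcd q.1 q.2.1) q.2.2.1) q.2.2.2 = 1}.Infinite :=
  stmt_3_general a b ha hb
end

section
/- Let a and b be nonzero integers and let n be a positive integer. Then the Diophantine equation a·(x² − y^(6n)) = b·(z⁶ − w⁶) has infinitely many solutions in integers (x, y, z, w) with z⁶ ≠ w⁶. -/
/-!
A solution of `a (X² - Y⁶) = b (Z⁶ - W⁶)` stays a solution under the weighted scaling
`(X, Y, Z, W) ↦ (c³X, cY, cZ, cW)`, and there is the polynomial solution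
`(2b(27a² + 5b²), -2b, 3a + b, b - 3a)`. Scaling it by `c = (-2b)^(n-1) tⁿ` makes the
`Y`-coordinate equal to `(-2bt)ⁿ`, so `y = -2bt` gives a solution of the original equation
for every `t ≠ 0`; these are pairwise distinct and nontrivial.
-/

lemma sextic_base_solution {R : Type*} [CommRing R] (a b : R) :
    a * ((2 * b * (27 * a ^ 2 + 5 * b ^ 2)) ^ 2 - (-2 * b) ^ 6) =
      b * ((3 * a + b) ^ 6 - (b - 3 * a) ^ 6) := by
  ring

lemma sextic_solution_scale {R : Type*} [CommRing R] {a b x y z w : R} (c : R)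
    (h : a * (x ^ 2 - y ^ 6) = b * (z ^ 6 - w ^ 6)) :
    a * ((c ^ 3 * x) ^ 2 - (c * y) ^ 6) = b * ((c * z) ^ 6 - (c * w) ^ 6) := by
  linear_combination c ^ 6 * h

lemma sextic_base_solution_nontrivial {R : Type*} [CommRing R] [LinearOrder R] [IsStrictOrderedRing R]
    {a b : R} (ha : a ≠ 0) (hb : b ≠ 0) : (3 * a + b) ^ 6 ≠ (b - 3 * a) ^ 6 := by
  rw [Ne, pow_eq_pow_iff_of_ne_zero (by norm_num)]
  rintro (h | ⟨h, -⟩)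
  · exact ha (by linarith)
  · exact hb (by linarith)

lemma mul_pow_ne_mul_pow {M : Type*} [CommMonoidWithZero M] [IsLeftCancelMulZero M] {c z w : M} {k : ℕ}
    (hc : c ≠ 0) (h : z ^ k ≠ w ^ k) : (c * z) ^ k ≠ (c * w) ^ k := by
  rw [mul_pow, mul_pow]
  exact fun h' => h (mul_left_cancel₀ (pow_ne_zero k hc) h')

/-- Let `a` and `b` be nonzero integers and let `n` be a positive integer. Then the
Diophantine equation `a*(x^2 - y^(6n)) = b*(z^6 - w^6)` has infinitely many solutions
in integers `(x, y, z, w)` with `z^6 ≠ w^6`. -/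
theorem stmt_4 (a b : ℤ) (ha : a ≠ 0) (hb : b ≠ 0) (n : ℕ) (hn : 0 < n) :
    {q : ℤ × ℤ × ℤ × ℤ |
      a * (q.1 ^ 2 - q.2.1 ^ (6 * n)) = b * (q.2.2.1 ^ 6 - q.2.2.2 ^ 6) ∧
      q.2.2.1 ^ 6 ≠ q.2.2.2 ^ 6}.Infinite := by
  let c : ℕ → ℤ := fun k => (-2 * b) ^ (n - 1) * ((k : ℤ) + 1) ^ n
  refine Set.infinite_of_injective_forall_mem (f := fun k : ℕ =>
    (c k ^ 3 * (2 * b * (27 * a ^ 2 + 5 * b ^ 2)), -2 * b * ((k : ℤ) + 1),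
      c k * (3 * a + b), c k * (b - 3 * a))) ?_ ?_
  · intro k₁ k₂ h
    simpa [hb] using congrArg (fun q => q.2.1) h
  · intro k
    have hy : (-2 * b * ((k : ℤ) + 1)) ^ n = c k * (-2 * b) := by
      rw [mul_pow, ← pow_sub_one_mul hn.ne' (-2 * b)]
      ring
    refine ⟨?_, mul_pow_ne_mul_pow ?_ (sextic_base_solution_nontrivial ha hb)⟩
    · rw [pow_mul', hy]
      exact sextic_solution_scale _ (sextic_base_solution a b)
    · have : (k : ℤ) + 1 ≠ 0 := by positivity
      exact mul_ne_zero (pow_ne_zero _ (by simpa using hb)) (pow_ne_zero _ this)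
end

section
/- The set of triples (x, y, z) ∈ ℚ³ satisfying x² + y⁶ = 2·(z⁶ + 1) is infinite. -/
/-!
Substituting `t = 1/13` in the cubic fibration of the surface gives the diagonal cubic
`373 y³ + 23 z³ = 527 w³`, which contains `(5, 18, 7)`. Because `23² + 527² = 2 · 373²`, every
point `(y : z : w)` of this cubic with `w ≠ 0` yields the rational point
`((23 + 527 (z/w)³) / 373, y/w, z/w)` of the surface. Iterating the tangent construction from
`(5, 18, 7)` keeps `y ≡ 1` and `w ≡ 3 (mod 4)` and raises the `2`-adic valuation of `z` by exactly
one at each step, so the resulting points of the surface are pairwise distinct.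
-/

section DiagonalCubic

variable {R : Type*} [CommRing R]

def OnDiagonalCubic (a b c : R) (P : R × R × R) : Prop :=
  a * P.1 ^ 3 + b * P.2.1 ^ 3 + c * P.2.2 ^ 3 = 0

/-- The third intersection point of the cubic `a X³ + b Y³ + c Z³ = 0` with its tangent at `P`. -/
def diagonalCubicTangent (a b c : R) (P : R × R × R) : R × R × R :=
  (P.1 * (b * P.2.1 ^ 3 - c * P.2.2 ^ 3), P.2.1 * (c * P.2.2 ^ 3 - a * P.1 ^ 3),
    P.2.2 * (a * P.1 ^ 3 - b * P.2.1 ^ 3))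

theorem OnDiagonalCubic.tangent {a b c : R} {P : R × R × R} (h : OnDiagonalCubic a b c P) :
    OnDiagonalCubic a b c (diagonalCubicTangent a b c P) := by
  obtain ⟨x, y, z⟩ := P
  unfold OnDiagonalCubic at *
  simp only [diagonalCubicTangent]
  -- `u (v - w)³ + v (w - u)³ + w (u - v)³ = (u + v + w)(u - v)(v - w)(w - u)`
  linear_combination
    (a * x ^ 3 - b * y ^ 3) * (b * y ^ 3 - c * z ^ 3) * (c * z ^ 3 - a * x ^ 3) * h

end DiagonalCubic

theorem sq_add_pow_six_eq_of_diagonalCubic {K : Type*} [Field K] {a b c x y z : K} (ha : a ≠ 0)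
    (habc : b ^ 2 + c ^ 2 = 2 * a ^ 2) (h : a * y ^ 3 + b * z ^ 3 + c = 0)
    (hx : a * x = b - c * z ^ 3) : x ^ 2 + y ^ 6 = 2 * (z ^ 6 + 1) := by
  refine mul_left_cancel₀ (pow_ne_zero 2 ha) ?_
  linear_combination (a * x + b - c * z ^ 3) * hx + (a * y ^ 3 - c - b * z ^ 3) * h
    + (z ^ 6 + 1) * habc

theorem padicValRat_prime_pow_mul_div {p : ℕ} [Fact p.Prime] (k : ℕ) {u r : ℤ}
    (hu : ¬ (p : ℤ) ∣ u) (hr : ¬ (p : ℤ) ∣ r) :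
    padicValRat p ((p : ℚ) ^ k * u / r) = k := by
  have hp : (p : ℚ) ≠ 0 := by exact_mod_cast (Fact.out : p.Prime).ne_zero
  have hu0 : (u : ℚ) ≠ 0 := Int.cast_ne_zero.2 (by rintro rfl; exact hu (dvd_zero _))
  have hr0 : (r : ℚ) ≠ 0 := Int.cast_ne_zero.2 (by rintro rfl; exact hr (dvd_zero _))
  rw [padicValRat.div (by positivity) hr0, padicValRat.mul (by positivity) hu0, padicValRat.pow,
    padicValRat.self (Fact.out : p.Prime).one_lt, padicValRat.of_int, padicValRat.of_int,
    padicValInt.eq_zero_of_not_dvd hu, padicValInt.eq_zero_of_not_dvd hr]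
  simp

def TwoAdicShape (k : ℕ) (P : ℤ × ℤ × ℤ) : Prop :=
  P.1 ≡ 1 [ZMOD 4] ∧ P.2.2 ≡ 3 [ZMOD 4] ∧ ∃ u, Odd u ∧ P.2.1 = 2 ^ k * u

theorem TwoAdicShape.odd_denom {k : ℕ} {P : ℤ × ℤ × ℤ} (hP : TwoAdicShape k P) :
    Odd P.2.2 := by
  have hr := hP.2.1
  rw [Int.ModEq] at hr
  rw [Int.odd_iff]
  omega

theorem TwoAdicShape.tangent {k : ℕ} {P : ℤ × ℤ × ℤ} (hP : TwoAdicShape (k + 1) P) :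
    TwoAdicShape (k + 2) (diagonalCubicTangent 373 23 (-527) P) := by
  obtain ⟨p, q, r⟩ := P
  obtain ⟨hp, hr, u, hu, hq⟩ := hP
  dsimp only at hp hr hq
  have hq3 : q ^ 3 ≡ 0 [ZMOD 4] :=
    Int.modEq_zero_iff_dvd.2 ⟨2 * (2 ^ k * u) ^ 3, by rw [hq]; ring⟩
  -- the new second coordinate is `q * -(373 p³ + 527 r³)`, and this factor is twice an odd number
  have hs : 373 * p ^ 3 + 527 * r ^ 3 ≡ 2 [ZMOD 4] :=
    ((hp.pow 3).mul_left 373).add ((hr.pow 3).mul_left 527) |>.trans (by decide)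
  refine ⟨?_, ?_, ?_⟩
  · exact (hp.mul ((hq3.mul_left 23).sub ((hr.pow 3).mul_left (-527)))).trans (by decide)
  · exact (hr.mul (((hp.pow 3).mul_left 373).sub (hq3.mul_left 23))).trans (by decide)
  · obtain ⟨t, ht, hst⟩ : ∃ t, Odd t ∧ 373 * p ^ 3 + 527 * r ^ 3 = 2 * t := by
      refine ⟨(373 * p ^ 3 + 527 * r ^ 3) / 2, ?_, ?_⟩ <;>
        simp only [Int.ModEq, Int.odd_iff] at hs ⊢ <;> omega
    refine ⟨-(u * t), (hu.mul ht).neg, ?_⟩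
    simp only [diagonalCubicTangent]
    rw [hq]
    linear_combination (-(2 ^ (k + 1) * u)) * hst

def cubicPoint (n : ℕ) : ℤ × ℤ × ℤ :=
  (diagonalCubicTangent 373 23 (-527))^[n] (5, 18, 7)

theorem onDiagonalCubic_cubicPoint (n : ℕ) :
    OnDiagonalCubic 373 23 (-527) (cubicPoint n) := by
  induction n with
  | zero => unfold cubicPoint OnDiagonalCubic; norm_num
  | succ n ih => rw [cubicPoint, Function.iterate_succ_apply']; exact ih.tangent

theorem twoAdicShape_cubicPoint (n : ℕ) : TwoAdicShape (n + 1) (cubicPoint n) := by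
  induction n with
  | zero => exact ⟨by decide, by decide, 9, by decide, by norm_num [cubicPoint]⟩
  | succ n ih => rw [cubicPoint, Function.iterate_succ_apply']; exact ih.tangent

def surfacePoint (P : ℤ × ℤ × ℤ) : ℚ × ℚ × ℚ :=
  ((23 + 527 * (P.2.1 / P.2.2 : ℚ) ^ 3) / 373, P.1 / P.2.2, P.2.1 / P.2.2)

theorem surfacePoint_mem {P : ℤ × ℤ × ℤ} (hP : OnDiagonalCubic 373 23 (-527) P)
    (hr : P.2.2 ≠ 0) :
    (surfacePoint P).1 ^ 2 + (surfacePoint P).2.1 ^ 6 = 2 * ((surfacePoint P).2.2 ^ 6 + 1) := by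
  obtain ⟨p, q, r⟩ := P
  have hr' : (r : ℚ) ≠ 0 := Int.cast_ne_zero.2 hr
  refine sq_add_pow_six_eq_of_diagonalCubic (a := 373) (b := 23) (c := -527)
    (by norm_num) (by norm_num) ?_ ?_
  · have hPℚ : (373 * p ^ 3 + 23 * q ^ 3 - 527 * r ^ 3 : ℚ) = 0 := by
      unfold OnDiagonalCubic at hP; exact_mod_cast (by linear_combination hP : _)
    simp only [surfacePoint]; field_simp; linear_combination hPℚ
  · simp only [surfacePoint]; field_simp; ring

theorem padicValRat_surfacePoint {k : ℕ} {P : ℤ × ℤ × ℤ} (hP : TwoAdicShape k P) :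
    padicValRat 2 (surfacePoint P).2.2 = k := by
  obtain ⟨u, hu, hq⟩ := hP.2.2
  simp only [surfacePoint, hq]
  push_cast
  exact padicValRat_prime_pow_mul_div (p := 2) k (by simpa [← even_iff_two_dvd] using hu)
    (by simpa [← even_iff_two_dvd] using hP.odd_denom)

/-- The set of triples `(x, y, z) ∈ ℚ³` satisfying `x^2 + y^6 = 2*(z^6 + 1)` is infinite. -/
theorem stmt_19 :
    {p : ℚ × ℚ × ℚ | p.1 ^ 2 + p.2.1 ^ 6 = 2 * (p.2.2 ^ 6 + 1)}.Infinite := by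
  refine Set.infinite_of_injective_forall_mem (f := surfacePoint ∘ cubicPoint) ?_ fun n => ?_
  · refine Function.Injective.of_comp (f := fun P => padicValRat 2 P.2.2) fun m n h => ?_
    simpa [padicValRat_surfacePoint (twoAdicShape_cubicPoint _)] using h
  · have hr := (twoAdicShape_cubicPoint n).odd_denom
    exact surfacePoint_mem (onDiagonalCubic_cubicPoint n) (by rintro h; simp [h] at hr)
end
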